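/- For every integer n ≥ 1, all η > 0, and all a, b ∈ ℝ^n, with Φ_η(x) := (2πη)^{−n/2} exp(−‖x‖²/(2η)) the centered Gaussian density of variance η on ℝ^n: ( ∫_{ℝ^n} (Φ_η(v − a) − Φ_η(v − b))² dv )^{1/2} ≤ 2^{−1/2} (4π)^{−n/4} · η^{−(n+2)/4} · ‖a − b‖. -/

import Mathlib

/-!
The cross term is a Gaussian convolution: by Apollonius's theorem
`‖v - a‖² + ‖v - b‖² = 2‖v - m‖² + ‖a - b‖²/2` with `m` the midpoint of `a` and `b`, so
`∫ Φ_η(v - a) Φ_η(v - b) dv = Φ_{2η}(a - b)`. Expanding the square,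
`‖Φ_η(· - a) - Φ_η(· - b)‖²_{L²} = 2 (Φ_{2η}(0) - Φ_{2η}(a - b))`, and `1 - e^{-t} ≤ t` bounds this
by `2 Φ_{2η}(0) ‖a - b‖² / (4η)`, which is the square of the right-hand side.
-/

open MeasureTheory

/-- The centered Gaussian density of variance `η` on `ℝⁿ` (Euclidean norm). -/
noncomputable def gaussDen (n : ℕ) (η : ℝ) (x : EuclideanSpace ℝ (Fin n)) : ℝ :=
  (2 * Real.pi * η) ^ (-(n : ℝ) / 2) * Real.exp (-‖x‖ ^ 2 / (2 * η))

open Real Module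

section GaussianIntegral

variable {V : Type*} [NormedAddCommGroup V] [InnerProductSpace ℝ V] [FiniteDimensional ℝ V]
  [MeasurableSpace V] [BorelSpace V]

theorem integral_exp_neg_mul_norm_sub_sq {β : ℝ} (hβ : 0 < β) (c : V) :
    ∫ v : V, exp (-β * ‖v - c‖ ^ 2) = (π / β) ^ (finrank ℝ V / 2 : ℝ) := by
  rw [integral_sub_right_eq_self (fun v ↦ exp (-β * ‖v‖ ^ 2)) c,
    GaussianFourier.integral_rexp_neg_mul_sq_norm hβ]

theorem integrable_exp_neg_mul_norm_sub_sq {β : ℝ} (hβ : 0 < β) (c : V) :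
    Integrable (fun v : V ↦ exp (-β * ‖v - c‖ ^ 2)) := by
  refine Integrable.of_integral_ne_zero ?_
  rw [integral_exp_neg_mul_norm_sub_sq hβ c]
  positivity

end GaussianIntegral

section GaussDen

variable {n : ℕ} {η : ℝ}

theorem gaussDen_zero (n : ℕ) (η : ℝ) : gaussDen n η 0 = (2 * π * η) ^ (-(n : ℝ) / 2) := by
  simp [gaussDen]

theorem gaussDen_sub_mul_gaussDen_sub (hη : 0 < η) (a b v : EuclideanSpace ℝ (Fin n)) :
    gaussDen n η (v - a) * gaussDen n η (v - b) =
      gaussDen n (2 * η) (a - b) *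
        ((π * η) ^ (-(n : ℝ) / 2) * exp (-η⁻¹ * ‖v - midpoint ℝ a b‖ ^ 2)) := by
  have apollonius :=
    EuclideanGeometry.dist_sq_add_dist_sq_eq_two_mul_dist_midpoint_sq_add_half_dist_sq v a b
  simp only [dist_eq_norm] at apollonius
  have hexp : exp (-‖v - a‖ ^ 2 / (2 * η)) * exp (-‖v - b‖ ^ 2 / (2 * η)) =
      exp (-‖a - b‖ ^ 2 / (2 * (2 * η))) * exp (-η⁻¹ * ‖v - midpoint ℝ a b‖ ^ 2) := by
    rw [← exp_add, ← exp_add]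
    congr 1
    field_simp
    linear_combination (-2) * apollonius
  have hconst : (2 * π * η) ^ (-(n : ℝ) / 2) * (2 * π * η) ^ (-(n : ℝ) / 2) =
      (2 * π * (2 * η)) ^ (-(n : ℝ) / 2) * (π * η) ^ (-(n : ℝ) / 2) := by
    rw [← mul_rpow (by positivity) (by positivity), ← mul_rpow (by positivity) (by positivity)]
    ring_nf
  simp only [gaussDen]
  rw [mul_mul_mul_comm, hexp, hconst]
  ring

theorem integrable_gaussDen_sub_mul_gaussDen_sub (hη : 0 < η) (a b : EuclideanSpace ℝ (Fin n)) :
    Integrable (fun v ↦ gaussDen n η (v - a) * gaussDen n η (v - b)) := by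
  simp_rw [gaussDen_sub_mul_gaussDen_sub hη]
  exact ((integrable_exp_neg_mul_norm_sub_sq (inv_pos.2 hη) _).const_mul _).const_mul _

theorem integral_gaussDen_sub_mul_gaussDen_sub (hη : 0 < η) (a b : EuclideanSpace ℝ (Fin n)) :
    ∫ v, gaussDen n η (v - a) * gaussDen n η (v - b) = gaussDen n (2 * η) (a - b) := by
  simp_rw [gaussDen_sub_mul_gaussDen_sub hη, integral_const_mul,
    integral_exp_neg_mul_norm_sub_sq (inv_pos.2 hη), finrank_euclideanSpace_fin, div_inv_eq_mul]
  rw [← rpow_add (by positivity), neg_div, neg_add_cancel, rpow_zero, mul_one]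

theorem integral_sq_gaussDen_sub_sub_gaussDen_sub (hη : 0 < η) (a b : EuclideanSpace ℝ (Fin n)) :
    ∫ v, (gaussDen n η (v - a) - gaussDen n η (v - b)) ^ 2 =
      2 * (gaussDen n (2 * η) 0 - gaussDen n (2 * η) (a - b)) := by
  have expand : ∀ v, (gaussDen n η (v - a) - gaussDen n η (v - b)) ^ 2 =
      gaussDen n η (v - a) * gaussDen n η (v - a) + gaussDen n η (v - b) * gaussDen n η (v - b) -
        2 * (gaussDen n η (v - a) * gaussDen n η (v - b)) := fun v ↦ by ring
  simp_rw [expand]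
  have hI := integrable_gaussDen_sub_mul_gaussDen_sub (n := n) hη
  rw [integral_sub (by exact (hI a a).add (hI b b)) ((hI a b).const_mul 2),
    integral_add (hI a a) (hI b b), integral_const_mul,
    integral_gaussDen_sub_mul_gaussDen_sub hη, integral_gaussDen_sub_mul_gaussDen_sub hη,
    integral_gaussDen_sub_mul_gaussDen_sub hη, sub_self, sub_self]
  ring

theorem gaussDen_zero_sub_le (hη : 0 ≤ η) (x : EuclideanSpace ℝ (Fin n)) :
    gaussDen n η 0 - gaussDen n η x ≤ gaussDen n η 0 * (‖x‖ ^ 2 / (2 * η)) := by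
  have hsub : 1 - exp (-‖x‖ ^ 2 / (2 * η)) ≤ ‖x‖ ^ 2 / (2 * η) := by
    linarith [add_one_le_exp (-‖x‖ ^ 2 / (2 * η)), neg_div (2 * η) (‖x‖ ^ 2)]
  rw [gaussDen_zero, gaussDen, ← mul_one_sub]
  exact mul_le_mul_of_nonneg_left hsub (by positivity)

theorem integral_sq_gaussDen_sub_sub_gaussDen_sub_le (hη : 0 < η)
    (a b : EuclideanSpace ℝ (Fin n)) :
    ∫ v, (gaussDen n η (v - a) - gaussDen n η (v - b)) ^ 2 ≤
      gaussDen n (2 * η) 0 * ‖a - b‖ ^ 2 / (2 * η) := by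
  rw [integral_sq_gaussDen_sub_sub_gaussDen_sub hη]
  calc 2 * (gaussDen n (2 * η) 0 - gaussDen n (2 * η) (a - b))
      ≤ 2 * (gaussDen n (2 * η) 0 * (‖a - b‖ ^ 2 / (2 * (2 * η)))) := by
        gcongr
        exact gaussDen_zero_sub_le (by positivity) (a - b)
    _ = gaussDen n (2 * η) 0 * ‖a - b‖ ^ 2 / (2 * η) := by
        field_simp

end GaussDen

theorem stmt12_general (n : ℕ) (η : ℝ) (hη : 0 < η)
    (a b : EuclideanSpace ℝ (Fin n)) :
    Real.sqrt (∫ v : EuclideanSpace ℝ (Fin n),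
        (gaussDen n η (v - a) - gaussDen n η (v - b)) ^ 2) ≤
      (2 : ℝ) ^ (-(1 : ℝ) / 2) * (4 * Real.pi) ^ (-(n : ℝ) / 4) *
        η ^ (-((n : ℝ) + 2) / 4) * ‖a - b‖ := by
  have h2 : ((2 : ℝ) ^ (-(1 : ℝ) / 2)) ^ 2 = 2⁻¹ := by
    rw [← rpow_mul_natCast (by norm_num)]
    norm_num
  have h4π : ((4 * π) ^ (-(n : ℝ) / 4)) ^ 2 = (4 * π) ^ (-(n : ℝ) / 2) := by
    rw [← rpow_mul_natCast (by positivity)]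
    ring_nf
  have hη2 : (η ^ (-((n : ℝ) + 2) / 4)) ^ 2 = η ^ (-(n : ℝ) / 2) / η := by
    rw [← rpow_mul_natCast hη.le, ← rpow_sub_one hη.ne']
    ring_nf
  have h4πη : gaussDen n (2 * η) 0 = (4 * π) ^ (-(n : ℝ) / 2) * η ^ (-(n : ℝ) / 2) := by
    rw [gaussDen_zero, ← mul_rpow (by positivity) hη.le]
    ring_nf
  refine sqrt_le_iff.2 ⟨by positivity,
    (integral_sq_gaussDen_sub_sub_gaussDen_sub_le hη a b).trans_eq ?_⟩
  rw [mul_pow, mul_pow, mul_pow, h2, h4π, hη2, h4πη]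
  field_simp

/-- `L²` translation-continuity estimate for the Gaussian kernel of variance `η`:
`‖Φ_η(· - a) - Φ_η(· - b)‖_{L²} ≤ 2^{-1/2} (4π)^{-n/4} η^{-(n+2)/4} ‖a - b‖`. -/
theorem stmt12 (n : ℕ) (hn : 1 ≤ n) (η : ℝ) (hη : 0 < η)
    (a b : EuclideanSpace ℝ (Fin n)) :
    Real.sqrt (∫ v : EuclideanSpace ℝ (Fin n),
        (gaussDen n η (v - a) - gaussDen n η (v - b)) ^ 2) ≤
      (2 : ℝ) ^ (-(1 : ℝ) / 2) * (4 * Real.pi) ^ (-(n : ℝ) / 4) *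
        η ^ (-((n : ℝ) + 2) / 4) * ‖a - b‖ :=
  stmt12_general n η hη a b
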